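/- arXiv:0804.3163 — 3 statements merged into one kernel-verified Lean document; each statement's English description precedes it below -/
import Mathlib

section
/- Let X be a nonempty compact Hausdorff space, let ν ∈ HX, let φ : X → ℝ be continuous, and let a, b, c ∈ ℝ with 0 ≤ a < c < b ≤ 1. Then p_{φ_(a,b)}(ν) = ((c-a)/(b-a))·p_{φ_(a,c)}(ν) + ((b-c)/(b-a))·p_{φ_(c,b)}(ν). -/
open Set MeasureTheory Topology Filter

noncomputable section

universe u

/-- The index set for the product of closed intervals: pairs consisting of a continuous
real-valued function on `X` and a subinterval `(a,b)` of `[0,1]` with `0 ≤ a < b ≤ 1`. -/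
abbrev HMIdx (X : Type u) [TopologicalSpace X] : Type u :=
  C(X, ℝ) × {p : ℝ × ℝ // 0 ≤ p.1 ∧ p.1 < p.2 ∧ p.2 ≤ 1}

/-- `α : ℝ → X` is a step function (on `[0,1)`): there is a partition
`0 = t₀ < t₁ < ⋯ < tₙ = 1` such that `α` is constant on each `[tᵢ, tᵢ₊₁)`. -/
def IsStepFun {X : Type u} (α : ℝ → X) : Prop :=
  ∃ (n : ℕ) (t : Fin (n + 1) → ℝ), t 0 = 0 ∧ t (Fin.last n) = 1 ∧ StrictMono t ∧
    ∀ i : Fin n, ∀ s ∈ Set.Ico (t i.castSucc) (t i.succ), α s = α (t i.castSucc)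

/-- The embedding of step functions into the product, whose `(φ,(a,b))`-th coordinate is
`(b-a)⁻¹ ∫_a^b φ(α(s)) ds`. -/
def hmEmbed {X : Type u} [TopologicalSpace X] (α : ℝ → X) : HMIdx X → ℝ :=
  fun p => (p.2.1.2 - p.2.1.1)⁻¹ * ∫ s in p.2.1.1..p.2.1.2, p.1 (α s)

/-- `HX`, realized as the closure of the image of the set of step functions in the product. -/
def HSet (X : Type u) [TopologicalSpace X] : Set (HMIdx X → ℝ) :=
  closure (hmEmbed '' {α : ℝ → X | IsStepFun α})

/-- The coordinate-wise description of the map `Hf` on the ambient product: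
`p_{φ_(a,b)} ∘ Hf = p_{(φ∘f)_(a,b)}`. -/
def Hmap {X Y : Type u} [TopologicalSpace X] [TopologicalSpace Y] (f : C(X, Y)) :
    (HMIdx X → ℝ) → HMIdx Y → ℝ :=
  fun ν p => ν ⟨p.1.comp f, p.2⟩

theorem Hmap_mapsTo {X Y : Type u} [TopologicalSpace X] [TopologicalSpace Y] (f : C(X, Y)) :
    Set.MapsTo (Hmap f) (HSet X) (HSet Y) := by
  intro ν hν
  have hc : Continuous (Hmap f) := continuous_pi fun p => continuous_apply _
  have hsub : Hmap f '' (hmEmbed '' {α : ℝ → X | IsStepFun α}) ⊆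
      hmEmbed '' {α : ℝ → Y | IsStepFun α} := by
    rintro _ ⟨_, ⟨α, hα, rfl⟩, rfl⟩
    refine ⟨f ∘ α, ?_, rfl⟩
    obtain ⟨n, t, h0, h1, hm, hstep⟩ := hα
    exact ⟨n, t, h0, h1, hm, fun i s hs => congrArg f (hstep i s hs)⟩
  have h1 : Hmap f ν ∈ closure (Hmap f '' (hmEmbed '' {α : ℝ → X | IsStepFun α})) :=
    image_closure_subset_closure_image hc ⟨ν, hν, rfl⟩
  exact closure_mono hsub h1

/-- The map `Hf : HX → HY` induced by `f : X → Y`. -/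
def HfSub {X Y : Type u} [TopologicalSpace X] [TopologicalSpace Y] (f : C(X, Y)) :
    ↥(HSet X) → ↥(HSet Y) :=
  Set.MapsTo.restrict (Hmap f) (HSet X) (HSet Y) (Hmap_mapsTo f)

/-- The Hartman–Mycielski "concatenation" map `e : HX × HX × I → HX`, described
coordinatewise on the ambient product. -/
def emap {X : Type u} [TopologicalSpace X] (μ ν : HMIdx X → ℝ) (t : ℝ) : HMIdx X → ℝ :=
  fun p =>
    if hb : p.2.1.2 ≤ t then μ p
    else if ha : t ≤ p.2.1.1 then ν p
    else
      ((t - p.2.1.1) * μ ⟨p.1, ⟨(p.2.1.1, t), p.2.2.1, not_le.mp ha,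
          (not_le.mp hb).le.trans p.2.2.2.2⟩⟩ +
        (p.2.1.2 - t) * ν ⟨p.1, ⟨(t, p.2.1.2), p.2.2.1.trans (not_le.mp ha).le,
          not_le.mp hb, p.2.2.2.2⟩⟩) / (p.2.1.2 - p.2.1.1)

/-- A subset `A ⊆ HX` is `e`-convex if it is closed under the maps `e(·,·,t)`, `t ∈ [0,1]`. -/
def EConvex {X : Type u} [TopologicalSpace X] (A : Set (HMIdx X → ℝ)) : Prop :=
  ∀ α ∈ A, ∀ β ∈ A, ∀ t ∈ Set.Icc (0 : ℝ) 1, emap α β t ∈ A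

/-- A subset of `HX` is `H`-convex if it is `e`-convex and convex. -/
def HConvexSet {X : Type u} [TopologicalSpace X] (A : Set (HMIdx X → ℝ)) : Prop :=
  EConvex A ∧ Convex ℝ A

/-- The point `δ(x) ∈ HX`: all coordinates `p_{φ_(a,b)}` equal `φ(x)`. -/
def deltaH {X : Type u} [TopologicalSpace X] (x : X) : HMIdx X → ℝ := fun p => p.1 x

theorem isStepFun_const {X : Type u} (x : X) : IsStepFun (fun _ : ℝ => x) := by
  refine ⟨1, ![0, 1], by simp, by simp [Fin.last], ?_, fun i s _ => rfl⟩
  intro a b hab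
  fin_cases a <;> fin_cases b <;> simp_all

theorem hmEmbed_const {X : Type u} [TopologicalSpace X] (x : X) :
    hmEmbed (fun _ : ℝ => x) = deltaH x := by
  funext p
  obtain ⟨φ, ⟨⟨a, b⟩, ha, hab, hb⟩⟩ := p
  simp only [hmEmbed, deltaH, intervalIntegral.integral_const, smul_eq_mul]
  exact inv_mul_cancel_left₀ (sub_ne_zero.2 hab.ne') _

theorem deltaH_mem {X : Type u} [TopologicalSpace X] (x : X) : deltaH x ∈ HSet X := by
  rw [← hmEmbed_const]
  exact subset_closure ⟨_, isStepFun_const x, rfl⟩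

/-- The natural inclusion `iX : P(X) → HX` (described on the ambient product):
`p_{φ_(a,b)}(iX(μ)) = ∫ φ dμ`. -/
def imapP {X : Type u} [TopologicalSpace X] [MeasurableSpace X]
    (μ : ProbabilityMeasure X) : HMIdx X → ℝ :=
  fun p => ∫ x, p.1 x ∂(μ : Measure X)

theorem intervalIntegrable_of_eqOn_Ico {E : Type*} [NormedAddCommGroup E] {f : ℝ → E} {u v : ℝ}
    {y : E} (huv : u ≤ v) (hf : EqOn f (fun _ => y) (Ico u v)) :
    IntervalIntegrable f volume u v :=
  (intervalIntegrable_iff_integrableOn_Ico_of_le huv).2 <|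
    (integrableOn_const measure_Ico_lt_top.ne).congr_fun hf.symm measurableSet_Ico

theorem IsStepFun.intervalIntegrable_comp {X : Type u} {E : Type*} [NormedAddCommGroup E]
    {α : ℝ → X} (hα : IsStepFun α) (g : X → E) {u v : ℝ} (hu : 0 ≤ u) (huv : u ≤ v)
    (hv : v ≤ 1) : IntervalIntegrable (fun s => g (α s)) volume u v := by
  obtain ⟨n, t, h0, h1, hmono, hconst⟩ := hα
  have upto : ∀ k : Fin (n + 1), IntervalIntegrable (fun s => g (α s)) volume (t 0) (t k) := by
    intro k
    induction k using Fin.induction with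
    | zero => exact IntervalIntegrable.refl
    | succ i ih =>
      exact ih.trans <| intervalIntegrable_of_eqOn_Ico (hmono Fin.castSucc_lt_succ).le
        fun s hs => congrArg g (hconst i s hs)
  have unit := upto (Fin.last n)
  rw [h0, h1] at unit
  refine unit.mono_set (uIcc_subset_uIcc ?_ ?_) <;>
    rw [uIcc_of_le zero_le_one] <;> constructor <;> linarith

theorem hmEmbed_eq_add_of_intervalIntegrable {X : Type u} [TopologicalSpace X] {α : ℝ → X}
    (φ : C(X, ℝ)) {a b c : ℝ} (ha : 0 ≤ a) (hac : a < c) (hcb : c < b) (hb : b ≤ 1)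
    (hac_int : IntervalIntegrable (fun s => φ (α s)) volume a c)
    (hcb_int : IntervalIntegrable (fun s => φ (α s)) volume c b) :
    hmEmbed α ⟨φ, ⟨(a, b), ha, hac.trans hcb, hb⟩⟩ =
      ((c - a) / (b - a)) * hmEmbed α ⟨φ, ⟨(a, c), ha, hac, hcb.le.trans hb⟩⟩ +
      ((b - c) / (b - a)) * hmEmbed α ⟨φ, ⟨(c, b), ha.trans hac.le, hcb, hb⟩⟩ := by
  simp only [hmEmbed]
  rw [← intervalIntegral.integral_add_adjacent_intervals hac_int hcb_int]
  have hba : b - a ≠ 0 := sub_ne_zero.2 (hac.trans hcb).ne'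
  have hca : c - a ≠ 0 := sub_ne_zero.2 hac.ne'
  have hbc : b - c ≠ 0 := sub_ne_zero.2 hcb.ne'
  field_simp

theorem eq_of_mem_HSet {X : Type u} [TopologicalSpace X] {F G : (HMIdx X → ℝ) → ℝ}
    (hF : Continuous F) (hG : Continuous G)
    (hstep : ∀ α : ℝ → X, IsStepFun α → F (hmEmbed α) = G (hmEmbed α))
    {ν : HMIdx X → ℝ} (hν : ν ∈ HSet X) : F ν = G ν :=
  EqOn.closure (by rintro _ ⟨α, hα, rfl⟩; exact hstep α hα) hF hG hν

theorem statement4_general (X : Type u) [TopologicalSpace X]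
    (ν : HMIdx X → ℝ) (hν : ν ∈ HSet X) (φ : C(X, ℝ)) (a b c : ℝ)
    (ha : 0 ≤ a) (hac : a < c) (hcb : c < b) (hb : b ≤ 1) :
    ν ⟨φ, ⟨(a, b), ha, hac.trans hcb, hb⟩⟩ =
      ((c - a) / (b - a)) * ν ⟨φ, ⟨(a, c), ha, hac, hcb.le.trans hb⟩⟩ +
      ((b - c) / (b - a)) * ν ⟨φ, ⟨(c, b), ha.trans hac.le, hcb, hb⟩⟩ := by
  refine eq_of_mem_HSet (F := fun μ => μ _) (G := fun μ => _ * μ _ + _ * μ _)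
    (by fun_prop) (by fun_prop) (fun α hα => ?_) hν
  exact hmEmbed_eq_add_of_intervalIntegrable φ ha hac hcb hb
    (hα.intervalIntegrable_comp φ ha hac.le (hcb.le.trans hb))
    (hα.intervalIntegrable_comp φ (ha.trans hac.le) hcb.le hb)

theorem statement4 (X : Type u) [TopologicalSpace X] [CompactSpace X] [T2Space X] [Nonempty X]
    (ν : HMIdx X → ℝ) (hν : ν ∈ HSet X) (φ : C(X, ℝ)) (a b c : ℝ)
    (ha : 0 ≤ a) (hac : a < c) (hcb : c < b) (hb : b ≤ 1) :
    ν ⟨φ, ⟨(a, b), ha, hac.trans hcb, hb⟩⟩ =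
      ((c - a) / (b - a)) * ν ⟨φ, ⟨(a, c), ha, hac, hcb.le.trans hb⟩⟩ +
      ((b - c) / (b - a)) * ν ⟨φ, ⟨(c, b), ha.trans hac.le, hcb, hb⟩⟩ :=
  statement4_general X ν hν φ a b c ha hac hcb hb

end
end

section
/- Let X be a nonempty compact Hausdorff space, let A be a closed H-convex subset of HX, and let ν ∈ HX with ν ∉ A. Then there exist a continuous function φ : X → ℝ and reals 0 < a < b < 1 such that p_{φ_(a,b)}(ν) < p_{φ_(a,b)}(μ) for every μ ∈ A. -/
open Set MeasureTheory Topology Filter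

noncomputable section

universe u

/-!
Separate `ν` from the closed convex set `A` by a continuous linear functional `f` on the product
(Hahn–Banach). Such an `f` involves only finitely many coordinates, and on `HX` every coordinate
`φ_(a,b)` is the length-weighted average of the coordinates of any subdivision of `(a,b)`. Over a
common partition `0 = t₀ < ⋯ < tₘ = 1` of all endpoints, `f` thus becomes `∑ⱼ p_{ψⱼ,(tⱼ,tⱼ₊₁)}`.
If none of these summands separated `ν` from `A` with a uniform gap, concatenating (by `e`)
points `μⱼ ∈ A` that nearly violate the `j`-th summand would give a point of `A` on the wrong side
of `f`. Finally the separating interval `(tⱼ,tⱼ₊₁)` is shrunk into `(0,1)`: cutting off pieces of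
length `δ` moves each coordinate by `O(δ ‖ψⱼ‖)`, which the gap absorbs.
-/

theorem ContinuousLinearMap.exists_finset_apply_eq_sum {ι 𝕜 : Type*} [NormedField 𝕜]
    [DecidableEq ι] (f : (ι → 𝕜) →L[𝕜] 𝕜) :
    ∃ s : Finset ι, ∀ x, f x = ∑ i ∈ s, x i * f (Pi.single i 1) := by
  have hball : f ⁻¹' Metric.ball 0 1 ∈ 𝓝 (0 : ι → 𝕜) :=
    f.continuous.continuousAt.preimage_mem_nhds (by simpa using Metric.ball_mem_nhds 0 one_pos)
  rw [nhds_pi, Filter.mem_pi] at hball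
  obtain ⟨I, hI, U, hU, hIU⟩ := hball
  -- `f` is bounded on the subspace of all `z` vanishing on `I`, hence zero there.
  have hker : ∀ z : ι → 𝕜, (∀ i ∈ I, z i = 0) → f z = 0 := by
    intro z hz
    by_contra hfz
    have hmem : (f z)⁻¹ • z ∈ I.pi U := fun i hi => by
      simpa [hz i hi] using mem_of_mem_nhds (hU i)
    simpa [inv_mul_cancel₀ hfz] using hIU hmem
  refine ⟨hI.toFinset, fun x => ?_⟩
  have hrest : f (x - ∑ i ∈ hI.toFinset, x i • Pi.single i 1) = 0 := hker _ fun i hi => by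
    simp [Finset.sum_apply, Pi.single_apply, hI.mem_toFinset.2 hi]
  rw [map_sub, sub_eq_zero] at hrest
  simp [hrest, map_sum]

theorem IsStepFun.intervalIntegrable {X : Type u} [TopologicalSpace X] {α : ℝ → X}
    (hα : IsStepFun α) (φ : C(X, ℝ)) {a b : ℝ} (ha : 0 ≤ a) (hab : a ≤ b) (hb : b ≤ 1) :
    IntervalIntegrable (fun s => φ (α s)) volume a b := by
  obtain ⟨n, t, ht0, ht1, htmono, hconst⟩ := hα
  set T : ℕ → ℝ := fun k => t ⟨min k n, by omega⟩
  have hpiece : ∀ k < n, IntervalIntegrable (fun s => φ (α s)) volume (T k) (T (k + 1)) := by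
    intro k hk
    have hTk : T k = t (Fin.castSucc ⟨k, hk⟩) := by simp [T, Nat.min_eq_left hk.le]
    have hTk' : T (k + 1) = t (Fin.succ ⟨k, hk⟩) := by simp [T, Nat.min_eq_left hk]
    rw [hTk, hTk', intervalIntegrable_iff,
      uIoc_of_le (htmono Fin.castSucc_lt_succ).le, integrableOn_Ioc_iff_integrableOn_Ioo,
      ← integrableOn_Ico_iff_integrableOn_Ioo]
    exact (integrableOn_const (C := φ (α (t (Fin.castSucc ⟨k, hk⟩)))) (by simp)).congr_fun
      (fun s hs => by simp [hconst _ s hs]) measurableSet_Ico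
  have hT0 : T 0 = 0 := by simpa [T] using ht0
  have hTn : T n = 1 := by simpa [T, Fin.last] using ht1
  refine (IntervalIntegrable.trans_iterate hpiece).mono_set ?_
  rw [hT0, hTn, uIcc_of_le hab, uIcc_of_le zero_le_one]
  exact Icc_subset_Icc ha hb

section Coordinates

variable {X : Type u} [TopologicalSpace X]

/-- The index `(φ, (a, b))`, with a junk value when `0 ≤ a < b ≤ 1` fails. -/
def hmIdx (φ : C(X, ℝ)) (a b : ℝ) : HMIdx X :=
  if h : 0 ≤ a ∧ a < b ∧ b ≤ 1 then ⟨φ, ⟨(a, b), h⟩⟩ else ⟨φ, ⟨(0, 1), by norm_num⟩⟩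

theorem hmIdx_eq_mk (φ : C(X, ℝ)) {a b : ℝ} (h : 0 ≤ a ∧ a < b ∧ b ≤ 1) :
    hmIdx φ a b = ⟨φ, ⟨(a, b), h⟩⟩ :=
  dif_pos h

theorem hmIdx_fst_snd (p : HMIdx X) : hmIdx p.1 p.2.1.1 p.2.1.2 = p :=
  hmIdx_eq_mk p.1 p.2.2

theorem hmEmbed_hmIdx (α : ℝ → X) (φ : C(X, ℝ)) {a b : ℝ} (h : 0 ≤ a ∧ a < b ∧ b ≤ 1) :
    hmEmbed α (hmIdx φ a b) = (b - a)⁻¹ * ∫ s in a..b, φ (α s) := by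
  rw [hmIdx_eq_mk φ h]
  rfl

@[elab_as_elim]
theorem HSet.induction {μ : HMIdx X → ℝ} (hμ : μ ∈ HSet X) {P : (HMIdx X → ℝ) → Prop}
    (hP : IsClosed {μ | P μ}) (hstep : ∀ α : ℝ → X, IsStepFun α → P (hmEmbed α)) : P μ :=
  closure_minimal (s := hmEmbed '' _) (by rintro _ ⟨α, hα, rfl⟩; exact hstep α hα) hP hμ

namespace HSet

variable {μ : HMIdx X → ℝ} {a b : ℝ}

theorem apply_smul (hμ : μ ∈ HSet X) (r : ℝ) (φ : C(X, ℝ)) (h : 0 ≤ a ∧ a < b ∧ b ≤ 1) :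
    μ (hmIdx (r • φ) a b) = r * μ (hmIdx φ a b) := by
  refine HSet.induction hμ (isClosed_eq (by fun_prop) (by fun_prop)) (fun α _ => ?_)
  simp only [hmEmbed_hmIdx _ _ h, ContinuousMap.smul_apply, smul_eq_mul,
    intervalIntegral.integral_const_mul]
  ring

theorem apply_add (hμ : μ ∈ HSet X) (φ ψ : C(X, ℝ)) (h : 0 ≤ a ∧ a < b ∧ b ≤ 1) :
    μ (hmIdx (φ + ψ) a b) = μ (hmIdx φ a b) + μ (hmIdx ψ a b) := by
  refine HSet.induction hμ (isClosed_eq (by fun_prop) (by fun_prop)) (fun α hα => ?_)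
  have hint := fun φ : C(X, ℝ) => hα.intervalIntegrable φ h.1 h.2.1.le h.2.2
  simp only [hmEmbed_hmIdx _ _ h, ContinuousMap.add_apply,
    intervalIntegral.integral_add (hint φ) (hint ψ)]
  ring

theorem apply_sum_smul (hμ : μ ∈ HSet X) {ι : Type*} (s : Finset ι) (w : ι → ℝ)
    (φ : ι → C(X, ℝ)) (h : 0 ≤ a ∧ a < b ∧ b ≤ 1) :
    μ (hmIdx (∑ i ∈ s, w i • φ i) a b) = ∑ i ∈ s, w i * μ (hmIdx (φ i) a b) := by
  let coord : C(X, ℝ) →ₗ[ℝ] ℝ :=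
    { toFun := fun φ => μ (hmIdx φ a b)
      map_add' := fun φ ψ => apply_add hμ φ ψ h
      map_smul' := fun r φ => apply_smul hμ r φ h }
  exact (map_sum coord _ s).trans (Finset.sum_congr rfl fun i _ => coord.map_smul _ _)

theorem split (hμ : μ ∈ HSet X) (φ : C(X, ℝ)) {c : ℝ}
    (ha : 0 ≤ a) (hac : a < c) (hcb : c < b) (hb : b ≤ 1) :
    (b - a) * μ (hmIdx φ a b) = (c - a) * μ (hmIdx φ a c) + (b - c) * μ (hmIdx φ c b) := by
  refine HSet.induction hμ (isClosed_eq (by fun_prop) (by fun_prop)) (fun α hα => ?_)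
  simp only [hmEmbed_hmIdx _ _ ⟨ha, hac.trans hcb, hb⟩,
    hmEmbed_hmIdx _ _ ⟨ha, hac, hcb.le.trans hb⟩, hmEmbed_hmIdx _ _ ⟨ha.trans hac.le, hcb, hb⟩,
    mul_inv_cancel_left₀ (sub_pos.2 (hac.trans hcb)).ne', mul_inv_cancel_left₀ (sub_pos.2 hac).ne',
    mul_inv_cancel_left₀ (sub_pos.2 hcb).ne']
  exact (intervalIntegral.integral_add_adjacent_intervals
    (hα.intervalIntegrable φ ha hac.le (hcb.le.trans hb))
    (hα.intervalIntegrable φ (ha.trans hac.le) hcb.le hb)).symm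

theorem abs_apply_le [CompactSpace X] (hμ : μ ∈ HSet X) (φ : C(X, ℝ))
    (h : 0 ≤ a ∧ a < b ∧ b ≤ 1) : |μ (hmIdx φ a b)| ≤ ‖φ‖ := by
  refine HSet.induction hμ (isClosed_le (by fun_prop) (by fun_prop)) (fun α _ => ?_)
  have hba : 0 < b - a := sub_pos.2 h.2.1
  have hint : |∫ s in a..b, φ (α s)| ≤ ‖φ‖ * (b - a) := by
    simpa [abs_of_pos hba] using intervalIntegral.norm_integral_le_of_norm_le_const (a := a)
      (b := b) (fun s _ => φ.norm_coe_le_norm (α s))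
  rw [hmEmbed_hmIdx _ _ h, abs_mul, abs_inv, abs_of_pos hba, inv_mul_le_iff₀ hba]
  linarith

end HSet

end Coordinates

section Partition

def IsIntervalPartition (t : ℕ → ℝ) (m : ℕ) : Prop :=
  StrictMonoOn t (Iic m) ∧ t 0 = 0 ∧ t m = 1

variable {t : ℕ → ℝ} {m : ℕ}

theorem IsIntervalPartition.mem_Icc (ht : IsIntervalPartition t m) {j : ℕ} (hj : j ≤ m) :
    t j ∈ Icc (0 : ℝ) 1 := by
  obtain ⟨hmono, h0, h1⟩ := ht
  exact ⟨h0 ▸ hmono.monotoneOn (mem_Iic.2 (Nat.zero_le m)) (mem_Iic.2 hj) (Nat.zero_le j),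
    h1 ▸ hmono.monotoneOn (mem_Iic.2 hj) (mem_Iic.2 le_rfl) hj⟩

theorem IsIntervalPartition.admissible (ht : IsIntervalPartition t m) {j : ℕ} (hj : j < m) :
    0 ≤ t j ∧ t j < t (j + 1) ∧ t (j + 1) ≤ 1 :=
  ⟨(ht.mem_Icc hj.le).1, ht.1 (mem_Iic.2 hj.le) (mem_Iic.2 hj) (Nat.lt_succ_self j),
    (ht.mem_Icc hj).2⟩

theorem exists_isIntervalPartition (E : Finset ℝ) (hE : ∀ x ∈ E, x ∈ Icc (0 : ℝ) 1) :
    ∃ (m : ℕ) (t : ℕ → ℝ), 0 < m ∧ IsIntervalPartition t m ∧ ↑E ⊆ t '' Iic m := by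
  set E' := insert 0 (insert 1 E)
  have hE' : ∀ x ∈ E', x ∈ Icc (0 : ℝ) 1 := by
    simp only [E', Finset.mem_insert]
    rintro x (rfl | rfl | hx)
    exacts [⟨le_rfl, zero_le_one⟩, ⟨zero_le_one, le_rfl⟩, hE x hx]
  have hcard : 2 ≤ E'.card := Finset.one_lt_card.2 ⟨0, by simp [E'], 1, by simp [E'], zero_ne_one⟩
  set g := E'.orderEmbOfFin rfl
  refine ⟨E'.card - 1, fun j => g ⟨min j (E'.card - 1), by omega⟩, by omega, ⟨?_, ?_, ?_⟩, ?_⟩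
  · intro i hi j hj hij
    simp only [mem_Iic] at hi hj
    simpa [Nat.min_eq_left hi, Nat.min_eq_left hj] using hij
  · simp only [Nat.zero_min]
    rw [Finset.orderEmbOfFin_zero rfl (by omega)]
    exact le_antisymm (Finset.min'_le _ _ (by simp [E'])) ((hE' _ (Finset.min'_mem _ _)).1)
  · simp only [min_self]
    rw [Finset.orderEmbOfFin_last rfl (by omega)]
    exact le_antisymm ((hE' _ (Finset.max'_mem _ _)).2) (Finset.le_max' _ _ (by simp [E']))
  · intro x hx
    obtain ⟨i, rfl⟩ : x ∈ range g := by simp [g, E', Finset.mem_coe.1 hx]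
    have hi : (i : ℕ) ≤ E'.card - 1 := by omega
    exact ⟨i, mem_Iic.2 hi, by simp [Nat.min_eq_left hi]⟩

end Partition

section Refinement

variable {X : Type u} [TopologicalSpace X] {μ : HMIdx X → ℝ} {t : ℕ → ℝ} {m : ℕ}

theorem HSet.sub_mul_apply_eq_sum (hμ : μ ∈ HSet X) (φ : C(X, ℝ))
    (ht : IsIntervalPartition t m) {k l : ℕ} (hkl : k < l) (hl : l ≤ m) :
    (t l - t k) * μ (hmIdx φ (t k) (t l)) =
      ∑ j ∈ Finset.Ico k l, (t (j + 1) - t j) * μ (hmIdx φ (t j) (t (j + 1))) := by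
  induction l, hkl using Nat.le_induction with
  | base => simp
  | succ l hkl ih =>
    have hlt : ∀ {i j : ℕ}, i < j → j ≤ m → t i < t j := fun hij hj =>
      ht.1 (mem_Iic.2 (hij.le.trans hj)) (mem_Iic.2 hj) hij
    rw [HSet.split hμ φ (ht.mem_Icc (by omega)).1 (hlt hkl (by omega)) (hlt (by omega) hl)
      (ht.mem_Icc hl).2, ih (by omega), Finset.sum_Ico_succ_top (by omega)]

def partWeight (t : ℕ → ℝ) (p : HMIdx X) (j : ℕ) : ℝ :=
  if p.2.1.1 ≤ t j ∧ t (j + 1) ≤ p.2.1.2 then (t (j + 1) - t j) / (p.2.1.2 - p.2.1.1) else 0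

theorem HSet.apply_eq_sum_partWeight (hμ : μ ∈ HSet X) (ht : IsIntervalPartition t m)
    (p : HMIdx X) {k l : ℕ} (hk : k ≤ m) (hka : t k = p.2.1.1) (hl : l ≤ m)
    (hlb : t l = p.2.1.2) :
    μ p = ∑ j ∈ Finset.range m, partWeight t p j * μ (hmIdx p.1 (t j) (t (j + 1))) := by
  have hba : p.2.1.2 - p.2.1.1 ≠ 0 := (sub_pos.2 p.2.2.2.1).ne'
  have hkl : k < l := (ht.1.lt_iff_lt (mem_Iic.2 hk) (mem_Iic.2 hl)).1 (hka ▸ hlb ▸ p.2.2.2.1)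
  have hpieces : (Finset.range m).filter (fun j => p.2.1.1 ≤ t j ∧ t (j + 1) ≤ p.2.1.2) =
      Finset.Ico k l := by
    ext j
    simp only [Finset.mem_filter, Finset.mem_range, Finset.mem_Ico, ← hka, ← hlb]
    constructor
    · rintro ⟨hj, hkj, hjl⟩
      exact ⟨(ht.1.le_iff_le (mem_Iic.2 hk) (mem_Iic.2 hj.le)).1 hkj,
        (ht.1.le_iff_le (mem_Iic.2 hj) (mem_Iic.2 hl)).1 hjl⟩
    · rintro ⟨hkj, hjl⟩
      exact ⟨by omega, (ht.1.le_iff_le (mem_Iic.2 hk) (mem_Iic.2 (by omega))).2 hkj,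
        (ht.1.le_iff_le (mem_Iic.2 (by omega)) (mem_Iic.2 hl)).2 hjl⟩
  calc μ p = (p.2.1.2 - p.2.1.1)⁻¹ * ((t l - t k) * μ (hmIdx p.1 (t k) (t l))) := by
        rw [hka, hlb, hmIdx_fst_snd, inv_mul_cancel_left₀ hba]
    _ = ∑ j ∈ Finset.Ico k l,
          (t (j + 1) - t j) / (p.2.1.2 - p.2.1.1) * μ (hmIdx p.1 (t j) (t (j + 1))) := by
        rw [HSet.sub_mul_apply_eq_sum hμ p.1 ht hkl hl, Finset.mul_sum]
        exact Finset.sum_congr rfl fun j _ => by ring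
    _ = _ := by
        rw [← hpieces, Finset.sum_filter]
        exact Finset.sum_congr rfl fun j _ => by simp only [partWeight, ite_mul, zero_mul]

theorem HSet.sum_mul_eq_sum_partition (hμ : μ ∈ HSet X) (ht : IsIntervalPartition t m)
    (S : Finset (HMIdx X)) (c : HMIdx X → ℝ)
    (hS : ∀ p ∈ S, p.2.1.1 ∈ t '' Iic m ∧ p.2.1.2 ∈ t '' Iic m) :
    ∑ p ∈ S, μ p * c p = ∑ j ∈ Finset.range m,
      μ (hmIdx (∑ p ∈ S, (c p * partWeight t p j) • p.1) (t j) (t (j + 1))) := by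
  calc ∑ p ∈ S, μ p * c p = ∑ p ∈ S, ∑ j ∈ Finset.range m,
        c p * partWeight t p j * μ (hmIdx p.1 (t j) (t (j + 1))) := by
        refine Finset.sum_congr rfl fun p hp => ?_
        obtain ⟨⟨k, hk, hka⟩, ⟨l, hl, hlb⟩⟩ := hS p hp
        rw [HSet.apply_eq_sum_partWeight hμ ht p hk hka hl hlb, Finset.sum_mul]
        exact Finset.sum_congr rfl fun j _ => by ring
    _ = _ := by
        rw [Finset.sum_comm]
        refine Finset.sum_congr rfl fun j hj => ?_
        rw [HSet.apply_sum_smul hμ _ _ _ (ht.admissible (Finset.mem_range.1 hj))]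

end Refinement

section Gluing

variable {X : Type u} [TopologicalSpace X]

def eGlue (μs : ℕ → HMIdx X → ℝ) (t : ℕ → ℝ) : ℕ → HMIdx X → ℝ
  | 0 => μs 0
  | k + 1 => emap (eGlue μs t k) (μs (k + 1)) (t (k + 1))

theorem EConvex.eGlue_mem {A : Set (HMIdx X → ℝ)} (hA : EConvex A) {μs : ℕ → HMIdx X → ℝ}
    {t : ℕ → ℝ} {k : ℕ} (hμs : ∀ j ≤ k, μs j ∈ A) (ht : ∀ j ≤ k, t j ∈ Icc (0 : ℝ) 1) :
    eGlue μs t k ∈ A := by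
  induction k with
  | zero => exact hμs 0 le_rfl
  | succ k ih =>
    exact hA _ (ih (fun j hj => hμs j (by omega)) (fun j hj => ht j (by omega))) _
      (hμs _ le_rfl) _ (ht _ le_rfl)

theorem eGlue_apply (μs : ℕ → HMIdx X → ℝ) {t : ℕ → ℝ} {k : ℕ}
    (ht : MonotoneOn t (Iic (k + 1))) {j : ℕ} (hj : j ≤ k) (p : HMIdx X)
    (hpa : t j ≤ p.2.1.1) (hpb : p.2.1.2 ≤ t (j + 1)) : eGlue μs t k p = μs j p := by
  induction k with
  | zero =>
    obtain rfl : j = 0 := by omega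
    rfl
  | succ k ih =>
    rcases Nat.lt_or_ge j (k + 1) with hjk | hjk
    · have hpk : p.2.1.2 ≤ t (k + 1) :=
        hpb.trans (ht (mem_Iic.2 (by omega)) (mem_Iic.2 (by omega)) (by omega))
      simp only [eGlue, emap, dif_pos hpk]
      exact ih (ht.mono (Iic_subset_Iic.2 (by omega))) (by omega)
    · obtain rfl : j = k + 1 := by omega
      have hpk : ¬ p.2.1.2 ≤ t (k + 1) := not_le.2 (hpa.trans_lt p.2.2.2.1)
      simp only [eGlue, emap, dif_neg hpk, dif_pos hpa]

end Gluing

section Separation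

variable {X : Type u} [TopologicalSpace X] {t : ℕ → ℝ} {m : ℕ}

theorem EConvex.exists_uniform_gap {A : Set (HMIdx X → ℝ)} (hA : EConvex A)
    (ht : IsIntervalPartition t m) (hm : 0 < m) (ψ : ℕ → C(X, ℝ)) (r : ℕ → ℝ) {u : ℝ}
    (hru : ∑ j ∈ Finset.range m, r j < u)
    (hAu : ∀ μ ∈ A, u < ∑ j ∈ Finset.range m, μ (hmIdx (ψ j) (t j) (t (j + 1)))) :
    ∃ j < m, ∃ ε > 0, ∀ μ ∈ A, r j + ε ≤ μ (hmIdx (ψ j) (t j) (t (j + 1))) := by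
  set ε := (u - ∑ j ∈ Finset.range m, r j) / m
  have hε : 0 < ε := div_pos (sub_pos.2 hru) (Nat.cast_pos.2 hm)
  by_contra! hcon
  choose! μs hμsA hμs using fun j hj => hcon j hj ε hε
  obtain ⟨k, rfl⟩ : ∃ k, m = k + 1 := ⟨m - 1, by omega⟩
  have hglue := hAu _ (hA.eGlue_mem (t := t) (k := k) (fun j hj => hμsA j (by omega))
    (fun j hj => ht.mem_Icc (by omega)))
  have hcoord : ∀ j ∈ Finset.range (k + 1), eGlue μs t k (hmIdx (ψ j) (t j) (t (j + 1))) =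
      μs j (hmIdx (ψ j) (t j) (t (j + 1))) := fun j hj => by
    have hj := Finset.mem_range.1 hj
    rw [hmIdx_eq_mk _ (ht.admissible hj)]
    exact eGlue_apply μs ht.1.monotoneOn (by omega) _ le_rfl le_rfl
  have hlt := Finset.sum_lt_sum_of_nonempty ⟨0, by simp⟩
    fun j hj => hμs j (Finset.mem_range.1 hj)
  rw [Finset.sum_congr rfl hcoord] at hglue
  rw [Finset.sum_add_distrib, Finset.sum_const, Finset.card_range, nsmul_eq_mul,
    mul_div_cancel₀ _ (Nat.cast_pos.2 hm).ne'] at hlt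
  linarith

end Separation

section Shrinking

variable {X : Type u} [TopologicalSpace X] [CompactSpace X] {μ : HMIdx X → ℝ} {a b : ℝ}

theorem HSet.abs_sub_mul_apply_le (hμ : μ ∈ HSet X) (φ : C(X, ℝ)) {δ : ℝ} (ha : 0 ≤ a)
    (hδ : 0 < δ) (hδab : a + δ < b - δ) (hb : b ≤ 1) :
    |(b - a) * μ (hmIdx φ a b) - (b - a - 2 * δ) * μ (hmIdx φ (a + δ) (b - δ))| ≤
      2 * δ * ‖φ‖ := by
  have hleft := HSet.split hμ φ (c := a + δ) ha (by linarith) (by linarith) hb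
  have hright := HSet.split hμ φ (a := a + δ) (c := b - δ) (by linarith) hδab (by linarith) hb
  have hbound₁ := abs_le.1 (HSet.abs_apply_le hμ φ ⟨ha, by linarith, by linarith⟩ :
    |μ (hmIdx φ a (a + δ))| ≤ ‖φ‖)
  have hbound₂ := abs_le.1 (HSet.abs_apply_le hμ φ ⟨by linarith, by linarith, hb⟩ :
    |μ (hmIdx φ (b - δ) b)| ≤ ‖φ‖)
  rw [abs_le]
  constructor <;> nlinarith

theorem HSet.exists_shrink_lt (φ : C(X, ℝ)) (ha : 0 ≤ a) (hab : a < b) (hb : b ≤ 1) {ε : ℝ}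
    (hε : 0 < ε) :
    ∃ δ > 0, a + δ < b - δ ∧ ∀ μ ∈ HSet X, ∀ ν ∈ HSet X,
      ν (hmIdx φ a b) + ε ≤ μ (hmIdx φ a b) →
        ν (hmIdx φ (a + δ) (b - δ)) < μ (hmIdx φ (a + δ) (b - δ)) := by
  set δ := min ((b - a) / 4) ((b - a) * ε / (4 * ‖φ‖ + 1))
  have hδ : 0 < δ := lt_min (by linarith) (by positivity)
  have hδ₁ : δ ≤ (b - a) / 4 := min_le_left _ _
  have hδ₂ : δ * (4 * ‖φ‖ + 1) ≤ (b - a) * ε := (le_div_iff₀ (by positivity)).1 (min_le_right _ _)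
  refine ⟨δ, hδ, by linarith, fun μ hμ ν hν hgap => ?_⟩
  have hμ' := abs_le.1 (HSet.abs_sub_mul_apply_le hμ φ ha hδ (by linarith) hb)
  have hν' := abs_le.1 (HSet.abs_sub_mul_apply_le hν φ ha hδ (by linarith) hb)
  have hgap' := mul_le_mul_of_nonneg_left hgap (sub_pos.2 hab).le
  refine lt_of_mul_lt_mul_left ?_ (by linarith : 0 ≤ b - a - 2 * δ)
  linarith

end Shrinking

theorem statement6_general (X : Type u) [TopologicalSpace X] [CompactSpace X]
    (A : Set (HMIdx X → ℝ)) (hA : A ⊆ HSet X) (hcl : IsClosed A) (hconv : HConvexSet A)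
    (ν : HMIdx X → ℝ) (hν : ν ∈ HSet X) (hνA : ν ∉ A) :
    ∃ (φ : C(X, ℝ)) (a b : ℝ) (ha : 0 < a) (hab : a < b) (hb : b < 1),
      ∀ μ ∈ A, ν ⟨φ, ⟨(a, b), ha.le, hab, hb.le⟩⟩ < μ ⟨φ, ⟨(a, b), ha.le, hab, hb.le⟩⟩ := by
  classical
  obtain ⟨f, u, hfν, hfA⟩ := geometric_hahn_banach_point_closed hconv.2 hcl hνA
  obtain ⟨S, hf⟩ := f.exists_finset_apply_eq_sum
  obtain ⟨m, t, hm, ht, hE⟩ := exists_isIntervalPartition (S.biUnion fun p => {p.2.1.1, p.2.1.2})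
    (by simp only [Finset.mem_biUnion, Finset.mem_insert, Finset.mem_singleton]
        rintro x ⟨p, -, rfl | rfl⟩
        exacts [⟨p.2.2.1, p.2.2.2.1.le.trans p.2.2.2.2⟩, ⟨p.2.2.1.trans p.2.2.2.1.le, p.2.2.2.2⟩])
  set ψ : ℕ → C(X, ℝ) := fun j => ∑ p ∈ S, (f (Pi.single p 1) * partWeight t p j) • p.1
  have hf_eq : ∀ μ ∈ HSet X, f μ = ∑ j ∈ Finset.range m, μ (hmIdx (ψ j) (t j) (t (j + 1))) :=
    fun μ hμ => (hf μ).trans <| HSet.sum_mul_eq_sum_partition hμ ht S _ fun p hp =>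
      ⟨hE (Finset.mem_biUnion.2 ⟨p, hp, by simp⟩), hE (Finset.mem_biUnion.2 ⟨p, hp, by simp⟩)⟩
  obtain ⟨j, hj, ε, hε, hgap⟩ := hconv.1.exists_uniform_gap ht hm ψ
    (fun j => ν (hmIdx (ψ j) (t j) (t (j + 1)))) (hf_eq ν hν ▸ hfν)
    fun μ hμ => hf_eq μ (hA hμ) ▸ hfA μ hμ
  obtain ⟨ha, hab, hb⟩ := ht.admissible hj
  obtain ⟨δ, hδ, hδab, hshrink⟩ := HSet.exists_shrink_lt (ψ j) ha hab hb hε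
  refine ⟨ψ j, t j + δ, t (j + 1) - δ, by linarith, hδab, by linarith, fun μ hμ => ?_⟩
  simpa only [hmIdx_eq_mk (ψ j) (⟨by linarith, hδab, by linarith⟩ :
    0 ≤ t j + δ ∧ t j + δ < t (j + 1) - δ ∧ t (j + 1) - δ ≤ 1)]
    using hshrink μ (hA hμ) ν hν (hgap μ hμ)

theorem statement6 (X : Type u) [TopologicalSpace X] [CompactSpace X] [T2Space X] [Nonempty X]
    (A : Set (HMIdx X → ℝ)) (hA : A ⊆ HSet X) (hcl : IsClosed A) (hconv : HConvexSet A)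
    (ν : HMIdx X → ℝ) (hν : ν ∈ HSet X) (hνA : ν ∉ A) :
    ∃ (φ : C(X, ℝ)) (a b : ℝ) (ha : 0 < a) (hab : a < b) (hb : b < 1),
      ∀ μ ∈ A, ν ⟨φ, ⟨(a, b), ha.le, hab, hb.le⟩⟩ < μ ⟨φ, ⟨(a, b), ha.le, hab, hb.le⟩⟩ :=
  statement6_general X A hA hcl hconv ν hν hνA

end
end

section
/- Let f : X → Y be a continuous surjection of nonempty compact Hausdorff spaces. Then for every ν ∈ HY, the fiber (Hf)⁻¹(ν) is an H-convex subset of HX. -/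
open Set MeasureTheory Topology Filter

noncomputable section

universe u

/-! Convexity of `HX` comes from interleaving: let `γ_r` follow `α` on the first fraction `c` of
each interval `[k/r, (k+1)/r)` and `β` on the rest. The periodic weight `s ↦ 1{fract (r s) < c}`
converges weakly to its mean `c`, so every coordinate of `γ_r` tends to the corresponding
coordinate of `c α + (1 - c) β`.
On step functions, `e(α, β, t)` is the step function obtained by gluing `α` and `β` at `t`; since
`e` is continuous, `HX` is `e`-convex.
The fibre of `Hf` over `ν` inherits both properties because `Hf` is linear and commutes with `e`,
and because `e(ν, ν, t) = ν`: the relation `(b - a) ν(a,b) = (t - a) ν(a,t) + (b - t) ν(t,b)`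
between the averages holds for step functions and is closed. -/

theorem Function.Periodic.tendsto_intervalIntegral_comp_mul {g : ℝ → ℝ} {T : ℝ}
    (hg : Function.Periodic g T) (hT : 0 < T)
    (hg_int : ∀ x y, IntervalIntegrable g volume x y) (u v : ℝ) :
    Tendsto (fun r => ∫ s in u..v, g (r * s)) atTop
      (𝓝 ((v - u) * (T⁻¹ * ∫ s in (0 : ℝ)..T, g s))) := by
  set m := T⁻¹ * ∫ s in (0 : ℝ)..T, g s
  -- the primitive of the mean-zero part `g - m` is periodic, hence bounded
  set G : ℝ → ℝ := fun x => (∫ s in (0 : ℝ)..x, g s) - m * x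
  have hG : Function.Periodic G T := fun x => by
    have hadd : ∫ s in (0 : ℝ)..x + T, g s =
        (∫ s in (0 : ℝ)..x, g s) + ∫ s in (0 : ℝ)..T, g s := by
      rw [← intervalIntegral.integral_add_adjacent_intervals (hg_int 0 x) (hg_int x (x + T)),
        hg.intervalIntegral_add_eq x 0, zero_add]
    simp only [G, hadd, m]
    field_simp
    ring
  obtain ⟨C, hC⟩ := isBounded_iff_forall_norm_le.mp
    (hG.isBounded_of_continuous hT.ne' ((intervalIntegral.continuous_primitive hg_int 0).sub
      (continuous_const.mul continuous_id)))
  have hsplit : ∀ r > 0,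
      ∫ s in u..v, g (r * s) = (v - u) * m + r⁻¹ * (G (r * v) - G (r * u)) := by
    intro r hr
    rw [intervalIntegral.integral_comp_mul_left g hr.ne', smul_eq_mul,
      ← intervalIntegral.integral_interval_sub_left (hg_int 0 _) (hg_int 0 _)]
    simp only [G]
    field_simp
    ring
  have herr : Tendsto (fun r : ℝ => r⁻¹ * (G (r * v) - G (r * u))) atTop (𝓝 0) :=
    tendsto_inv_atTop_zero.zero_mul_isBoundedUnder_le
      ⟨C + C, eventually_map.mpr (Eventually.of_forall fun r =>
        (norm_sub_le _ _).trans (add_le_add (hC _ ⟨_, rfl⟩) (hC _ ⟨_, rfl⟩)))⟩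
  refine Tendsto.congr' ?_ (by simpa using herr.const_add ((v - u) * m))
  filter_upwards [eventually_gt_atTop 0] with r hr using (hsplit r hr).symm

theorem intervalIntegrable_comp_mul_left_of_forall {g : ℝ → ℝ}
    (hg : ∀ x y, IntervalIntegrable g volume x y) {r : ℝ} (hr : r ≠ 0) (x y : ℝ) :
    IntervalIntegrable (fun s => g (r * s)) volume x y := by
  simpa [mul_div_cancel_left₀ _ hr] using (hg (r * x) (r * y)).comp_mul_left (c := r)

theorem intervalIntegrable_indicator_fract_lt (c x y : ℝ) :
    IntervalIntegrable ({s : ℝ | Int.fract s < c}.indicator (1 : ℝ → ℝ)) volume x y :=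
  (intervalIntegrable_const (c := (1 : ℝ))).mono_fun
    (measurable_const.indicator
      (measurableSet_lt measurable_fract measurable_const)).aestronglyMeasurable
    (Eventually.of_forall fun s => by by_cases h : Int.fract s < c <;> simp [h])

theorem periodic_indicator_fract_lt (c : ℝ) :
    Function.Periodic ({s : ℝ | Int.fract s < c}.indicator (1 : ℝ → ℝ)) 1 := fun s => by
  simp [Set.indicator_apply, Int.fract_add_one]

theorem integral_indicator_fract_lt {c : ℝ} (hc0 : 0 ≤ c) (hc1 : c ≤ 1) :
    ∫ s in (0 : ℝ)..1, {s : ℝ | Int.fract s < c}.indicator (1 : ℝ → ℝ) s = c := by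
  have hfract : ∀ s ∈ Ioo (0 : ℝ) 1, Int.fract s = s := fun s hs =>
    Int.fract_eq_self.mpr ⟨hs.1.le, hs.2⟩
  rw [← intervalIntegral.integral_add_adjacent_intervals
      (intervalIntegrable_indicator_fract_lt c 0 c) (intervalIntegrable_indicator_fract_lt c c 1),
    intervalIntegral.integral_congr_Ioo_of_le hc0 (g := fun _ => 1) fun s hs => by
      simp [hfract s ⟨hs.1, hs.2.trans_le hc1⟩, hs.2],
    intervalIntegral.integral_congr_Ioo_of_le hc1 (g := fun _ => 0) fun s hs => by
      simp [hfract s ⟨hc0.trans_lt hs.1, hs.2⟩, hs.1.le]]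
  simp

theorem Ioo_max_min_subset {a b x y : ℝ} :
    Ioo (max a (min b x)) (max a (min b y)) ⊆ Ioo x y := by
  rintro s ⟨h1, h2⟩
  simp only [max_lt_iff, lt_max_iff, lt_min_iff, min_lt_iff] at h1 h2
  constructor <;> grind

theorem exists_mem_Ico_succ {β : Type*} [LinearOrder β] {t : ℕ → β} {n : ℕ} {s : β}
    (hs : s ∈ Ico (t 0) (t n)) : ∃ k < n, s ∈ Ico (t k) (t (k + 1)) := by
  classical
  have hex : ∃ j, s < t j := ⟨n, hs.2⟩
  have hpos : Nat.find hex ≠ 0 := fun h0 => (Nat.find_spec hex).not_ge (h0 ▸ hs.1)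
  obtain ⟨k, hk⟩ := Nat.exists_eq_succ_of_ne_zero hpos
  have hkn : k < n := by have := Nat.find_min' hex hs.2; omega
  refine ⟨k, hkn, not_lt.mp (Nat.find_min hex (by omega)), ?_⟩
  rw [← Nat.succ_eq_add_one, ← hk]
  exact Nat.find_spec hex

namespace IsStepFun

variable {X : Type*} {α : ℝ → X}

theorem exists_nat_partition (h : IsStepFun α) :
    ∃ (n : ℕ) (t : ℕ → ℝ), t 0 = 0 ∧ t n = 1 ∧ Monotone t ∧
      ∀ k < n, ∀ s ∈ Ico (t k) (t (k + 1)), α s = α (t k) := by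
  obtain ⟨n, t, h0, h1, hmono, hstep⟩ := h
  refine ⟨n, fun k => t ⟨min k n, by omega⟩, by simpa using h0,
    by simp only [min_self]; exact h1,
    fun i j hij => hmono.monotone (Fin.mk_le_mk.mpr (min_le_min_right n hij)),
    fun k hk s hs => ?_⟩
  have hk' : min (k + 1) n = k + 1 := min_eq_left hk
  simp only [min_eq_left hk.le, hk'] at hs ⊢
  exact hstep ⟨k, hk⟩ s hs

theorem exists_finset (h : IsStepFun α) :
    ∃ T : Finset ℝ, ∀ x ∈ Ico (0 : ℝ) 1, ∀ y ∈ Ico (0 : ℝ) 1,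
      (∀ p ∈ T, x < p ↔ y < p) → α x = α y := by
  obtain ⟨n, t, h0, h1, -, hstep⟩ := h.exists_nat_partition
  refine ⟨(Finset.range (n + 1)).image t, fun x hx y hy hxy => ?_⟩
  obtain ⟨k, hk, hxk⟩ := exists_mem_Ico_succ (t := t) (n := n) (h0 ▸ h1 ▸ hx)
  have hside : ∀ j ≤ n, (x < t j ↔ y < t j) := fun j hj =>
    hxy _ (Finset.mem_image_of_mem t (Finset.mem_range.mpr (Nat.lt_succ_of_le hj)))
  have hyk : y ∈ Ico (t k) (t (k + 1)) :=
    ⟨not_lt.mp ((hside k hk.le).not.mp hxk.1.not_gt), (hside (k + 1) hk).mp hxk.2⟩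
  rw [hstep k hk x hxk, hstep k hk y hyk]

theorem of_finset (T : Finset ℝ)
    (hT : ∀ x ∈ Ico (0 : ℝ) 1, ∀ y ∈ Ico (0 : ℝ) 1, (∀ p ∈ T, x < p ↔ y < p) → α x = α y) :
    IsStepFun α := by
  classical
  -- the partition: the points of `T` in `[0, 1]`, together with `0` and `1`, in increasing order
  set T' := (insert 0 (insert 1 T)).filter (· ∈ Icc (0 : ℝ) 1)
  have h0 : (0 : ℝ) ∈ T' := by simp [T']
  have h1 : (1 : ℝ) ∈ T' := by simp [T']
  have hT' : ∀ p ∈ T', p ∈ Icc (0 : ℝ) 1 := fun p hp => (Finset.mem_filter.mp hp).2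
  obtain ⟨n, hn⟩ : ∃ n, T'.card = n + 1 :=
    ⟨T'.card - 1, by have := Finset.card_pos.mpr ⟨0, h0⟩; omega⟩
  set t := T'.orderEmbOfFin hn
  have htT' : ∀ i, t i ∈ T' := fun i => T'.orderEmbOfFin_mem hn i
  refine ⟨n, fun i => t i, ?_, ?_, t.strictMono, fun i s hs => ?_⟩
  · show T'.orderEmbOfFin hn ⟨0, n.succ_pos⟩ = 0
    rw [Finset.orderEmbOfFin_zero hn n.succ_pos]
    exact le_antisymm (T'.min'_le 0 h0) (hT' _ (T'.min'_mem _)).1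
  · show T'.orderEmbOfFin hn ⟨n + 1 - 1, by omega⟩ = 1
    rw [Finset.orderEmbOfFin_last hn n.succ_pos]
    exact le_antisymm (hT' _ (T'.max'_mem _)).2 (T'.le_max' 1 h1)
  have hsucc : t i.succ ≤ 1 := (hT' _ (htT' _)).2
  have hcast : (0 : ℝ) ≤ t i.castSucc := (hT' _ (htT' _)).1
  have hlt : t i.castSucc < t i.succ := t.strictMono Fin.castSucc_lt_succ
  refine hT s ⟨hcast.trans hs.1, hs.2.trans_le hsucc⟩ _ ⟨hcast, hlt.trans_le hsucc⟩
    fun p hp => ?_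
  by_cases hp01 : p ∈ Icc (0 : ℝ) 1
  · obtain ⟨j, rfl⟩ : p ∈ Set.range t := by
      rw [Finset.range_orderEmbOfFin]; exact Finset.mem_filter.mpr ⟨by simp [hp], hp01⟩
    rcases lt_or_ge i.castSucc j with hij | hij
    · have : t i.succ ≤ t j := t.monotone (Fin.castSucc_lt_iff_succ_le.mp hij)
      exact iff_of_true (hs.2.trans_le this) (t.strictMono hij)
    · exact iff_of_false (not_lt.mpr ((t.monotone hij).trans hs.1))
        (not_lt.mpr (t.monotone hij))
  · simp only [mem_Icc, not_and_or, not_le] at hp01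
    rcases hp01 with hp | hp
    · exact iff_of_false (by linarith [hs.1]) (by linarith)
    · exact iff_of_true (by linarith [hs.2]) (by linarith)

theorem ite {β : ℝ → X} {p : ℝ → Prop} [DecidablePred p]
    (hp : IsStepFun fun s => decide (p s)) (hα : IsStepFun α) (hβ : IsStepFun β) :
    IsStepFun fun s => if p s then α s else β s := by
  obtain ⟨Tp, hTp⟩ := hp.exists_finset
  obtain ⟨Tα, hTα⟩ := hα.exists_finset
  obtain ⟨Tβ, hTβ⟩ := hβ.exists_finset
  classical
  refine of_finset (Tp ∪ Tα ∪ Tβ) fun x hx y hy hxy => ?_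
  have hpxy : p x ↔ p y :=
    decide_eq_decide.mp (hTp x hx y hy fun q hq => hxy q (by simp [hq]))
  rw [hTα x hx y hy fun q hq => hxy q (by simp [hq]),
    hTβ x hx y hy fun q hq => hxy q (by simp [hq])]
  simp only [hpxy]

theorem exists_integral_mul_eq_sum (h : IsStepFun α) (F : X → ℝ) {a b : ℝ} (ha : 0 ≤ a)
    (hab : a ≤ b) (hb : b ≤ 1) :
    ∃ (n : ℕ) (u K : ℕ → ℝ), ∀ w : ℝ → ℝ, (∀ x y, IntervalIntegrable w volume x y) →
      IntervalIntegrable (fun s => w s * F (α s)) volume a b ∧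
      ∫ s in a..b, w s * F (α s) = ∑ k ∈ Finset.range n, K k * ∫ s in u k..u (k + 1), w s := by
  obtain ⟨n, t, h0, h1, hmono, hstep⟩ := h.exists_nat_partition
  set u : ℕ → ℝ := fun k => max a (min b (t k))
  have hu0 : u 0 = a := by simp [u, h0, ha]
  have hun : u n = b := by simp [u, h1, hb, hab]
  have hpiece : ∀ w : ℝ → ℝ, ∀ k < n, EqOn (fun s => F (α (t k)) * w s)
      (fun s => w s * F (α s)) (uIoo (u k) (u (k + 1))) := by
    intro w k hk s hs
    have hmono_u : u k ≤ u (k + 1) :=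
      max_le_max le_rfl (min_le_min le_rfl (hmono k.le_succ))
    rw [uIoo_of_le hmono_u] at hs
    have hs' := Ioo_max_min_subset hs
    simp only [hstep k hk s ⟨hs'.1.le, hs'.2⟩, mul_comm]
  refine ⟨n, u, fun k => F (α (t k)), fun w hw => ?_⟩
  have hint : ∀ k < n, IntervalIntegrable (fun s => w s * F (α s)) volume (u k) (u (k + 1)) :=
    fun k hk => ((hw _ _).const_mul _).congr_uIoo (hpiece w k hk)
  refine ⟨hu0 ▸ hun ▸ IntervalIntegrable.trans_iterate hint, ?_⟩
  rw [← hu0, ← hun, ← intervalIntegral.sum_integral_adjacent_intervals hint]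
  refine Finset.sum_congr rfl fun k hk => ?_
  rw [← intervalIntegral.integral_const_mul,
    intervalIntegral.integral_congr_uIoo (hpiece w k (Finset.mem_range.mp hk))]

theorem intervalIntegrable_mul (h : IsStepFun α) (F : X → ℝ) {w : ℝ → ℝ}
    (hw : ∀ x y, IntervalIntegrable w volume x y) {a b : ℝ} (ha : 0 ≤ a) (hab : a ≤ b)
    (hb : b ≤ 1) : IntervalIntegrable (fun s => w s * F (α s)) volume a b := by
  obtain ⟨n, u, K, H⟩ := h.exists_integral_mul_eq_sum F ha hab hb
  exact (H w hw).1

theorem intervalIntegrable_comp_s7 (h : IsStepFun α) (F : X → ℝ) {a b : ℝ} (ha : 0 ≤ a)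
    (hab : a ≤ b) (hb : b ≤ 1) : IntervalIntegrable (fun s => F (α s)) volume a b := by
  simpa using h.intervalIntegrable_mul F (w := fun _ => 1) (fun _ _ => intervalIntegrable_const)
    ha hab hb

theorem tendsto_integral_periodic_comp_mul {g : ℝ → ℝ} {T : ℝ} (h : IsStepFun α) (F : X → ℝ)
    (hg : Function.Periodic g T) (hT : 0 < T) (hg_int : ∀ x y, IntervalIntegrable g volume x y)
    {a b : ℝ} (ha : 0 ≤ a) (hab : a ≤ b) (hb : b ≤ 1) :
    Tendsto (fun r => ∫ s in a..b, g (r * s) * F (α s)) atTop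
      (𝓝 ((T⁻¹ * ∫ s in (0 : ℝ)..T, g s) * ∫ s in a..b, F (α s))) := by
  obtain ⟨n, u, K, H⟩ := h.exists_integral_mul_eq_sum F ha hab hb
  have hF : ∫ s in a..b, F (α s) = ∑ k ∈ Finset.range n, K k * (u (k + 1) - u k) := by
    simpa using (H (fun _ => 1) fun _ _ => intervalIntegrable_const).2
  have hlim := tendsto_finsetSum (Finset.range n) fun k _ =>
    (hg.tendsto_intervalIntegral_comp_mul hT hg_int (u k) (u (k + 1))).const_mul (K k)
  have hev : (fun r => ∑ k ∈ Finset.range n, K k * ∫ s in u k..u (k + 1), g (r * s))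
      =ᶠ[atTop] fun r => ∫ s in a..b, g (r * s) * F (α s) := by
    filter_upwards [eventually_gt_atTop 0] with r hr
    exact ((H _ (intervalIntegrable_comp_mul_left_of_forall hg_int hr.ne')).2).symm
  convert hlim.congr' hev using 2
  rw [hF, Finset.mul_sum]
  exact Finset.sum_congr rfl fun _ _ => by ring

end IsStepFun

theorem isStepFun_lt (t : ℝ) : IsStepFun fun s => decide (s < t) :=
  IsStepFun.of_finset {t} fun x _ y _ hxy => by simp [hxy t (Finset.mem_singleton_self t)]

theorem isStepFun_fract_mul_lt {r : ℝ} (hr : 0 < r) (c : ℝ) :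
    IsStepFun fun s => decide (Int.fract (r * s) < c) := by
  classical
  -- on `[k/r, (k+1)/r)` the condition reads `s < (k+c)/r`
  set K := Finset.Icc (0 : ℤ) ⌈r⌉
  refine IsStepFun.of_finset
    (K.image (fun k : ℤ => (k : ℝ) / r) ∪ K.image (fun k : ℤ => (k + c) / r))
    fun x hx y hy hxy => ?_
  have hside : ∀ k ∈ K, ∀ d ∈ ({0, c} : Set ℝ), (r * x < k + d ↔ r * y < k + d) := by
    rintro k hk d (rfl | rfl)
    · simpa [← lt_div_iff₀' hr] using
        hxy _ (Finset.mem_union_left _ (Finset.mem_image_of_mem _ hk))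
    · simpa [← lt_div_iff₀' hr] using
        hxy _ (Finset.mem_union_right _ (Finset.mem_image_of_mem _ hk))
  set k := ⌊r * x⌋
  have hk0 : 0 ≤ k := Int.floor_nonneg.mpr (mul_nonneg hr.le hx.1)
  have hkr : k + 1 ≤ ⌈r⌉ := by
    have : (k : ℝ) < r := (Int.floor_le _).trans_lt (by nlinarith [hx.2])
    exact Int.add_one_le_of_lt (Int.cast_lt.mp (this.trans_le (Int.le_ceil r)))
  have hkK : k ∈ K := Finset.mem_Icc.mpr ⟨hk0, by omega⟩
  have hk1K : k + 1 ∈ K := Finset.mem_Icc.mpr ⟨by omega, hkr⟩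
  have hfloor : ⌊r * y⌋ = k := by
    rw [Int.floor_eq_iff]
    constructor
    · simpa using (hside k hkK 0 (by simp)).not.mp
        (by rw [add_zero]; exact (Int.floor_le _).not_gt)
    · simpa using (hside (k + 1) hk1K 0 (by simp)).mp
        (by push_cast; rw [add_zero]; exact Int.lt_floor_add_one _)
  have hfract : ∀ z, ⌊z⌋ = k → (Int.fract z < c ↔ z < k + c) := fun z hz => by
    rw [Int.fract, hz]; constructor <;> intro h <;> linarith
  simpa [hfract _ rfl, hfract _ hfloor] using hside k hkK c (by simp)

section HSet

variable {X : Type*} [TopologicalSpace X]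

theorem smul_add_smul_hmEmbed_mem_HSet {α β : ℝ → X}
    (hα : IsStepFun α) (hβ : IsStepFun β) {c : ℝ} (hc0 : 0 ≤ c) (hc1 : c ≤ 1) :
    c • hmEmbed α + (1 - c) • hmEmbed β ∈ HSet X := by
  set w : ℝ → ℝ := {s : ℝ | Int.fract s < c}.indicator 1
  have hw_int := intervalIntegrable_indicator_fract_lt c
  have hw'_int : ∀ x y, IntervalIntegrable (fun s => 1 - w s) volume x y :=
    fun x y => intervalIntegrable_const.sub (hw_int x y)
  set γ : ℝ → ℝ → X := fun r s => if Int.fract (r * s) < c then α s else β s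
  refine mem_closure_of_tendsto (f := fun r => hmEmbed (γ r)) (b := atTop) ?_ ?_
  · rw [tendsto_pi_nhds]
    rintro ⟨φ, ⟨⟨a, b⟩, ha, hab, hb⟩⟩
    have hpt : ∀ r s, φ (γ r s) = w (r * s) * φ (α s) + (1 - w (r * s)) * φ (β s) := by
      intro r s
      by_cases h : Int.fract (r * s) < c <;> simp [γ, w, h]
    have hA := hα.tendsto_integral_periodic_comp_mul φ (periodic_indicator_fract_lt c) one_pos
      hw_int ha hab.le hb
    have hB := hβ.tendsto_integral_periodic_comp_mul φ
      (fun s => by simp only [periodic_indicator_fract_lt c s, w]) one_pos hw'_int ha hab.le hb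
    rw [integral_indicator_fract_lt hc0 hc1] at hA
    rw [intervalIntegral.integral_sub intervalIntegrable_const (hw_int 0 1),
      integral_indicator_fract_lt hc0 hc1] at hB
    have hsplit : ∀ r ≠ 0, hmEmbed (γ r) ⟨φ, ⟨(a, b), ha, hab, hb⟩⟩ = (b - a)⁻¹ *
        ((∫ s in a..b, w (r * s) * φ (α s)) + ∫ s in a..b, (1 - w (r * s)) * φ (β s)) := by
      intro r hr
      simp only [hmEmbed, hpt]
      rw [intervalIntegral.integral_add
        (hα.intervalIntegrable_mul φ (intervalIntegrable_comp_mul_left_of_forall hw_int hr)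
          ha hab.le hb)
        (hβ.intervalIntegrable_mul φ (w := fun s => 1 - w (r * s))
          (intervalIntegrable_comp_mul_left_of_forall hw'_int hr) ha hab.le hb)]
    convert ((hA.add hB).const_mul (b - a)⁻¹).congr' ?_ using 2
    · simp only [hmEmbed, Pi.add_apply, Pi.smul_apply, smul_eq_mul, inv_one, one_mul,
        intervalIntegral.integral_const, sub_zero, mul_one]
      ring
    · filter_upwards [eventually_gt_atTop 0] with r hr using (hsplit r hr.ne').symm
  · filter_upwards [eventually_gt_atTop 0] with r hr
    exact ⟨γ r, (isStepFun_fract_mul_lt hr c).ite hα hβ, rfl⟩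

theorem convex_HSet : Convex ℝ (HSet X) := by
  intro μ hμ β hβ c d hc hd hcd
  obtain rfl : d = 1 - c := by linarith
  refine (isClosed_closure : IsClosed (HSet X)).closure_subset
    (map_mem_closure₂ (f := fun μ β => c • μ + (1 - c) • β) (by fun_prop) hμ hβ ?_)
  rintro _ ⟨α, hα, rfl⟩ _ ⟨β, hβ, rfl⟩
  exact smul_add_smul_hmEmbed_mem_HSet hα hβ hc (by linarith)

theorem hmEmbed_apply_eq_of_eqOn {α β : ℝ → X} {p : HMIdx X}
    (h : EqOn α β (Ioo p.2.1.1 p.2.1.2)) : hmEmbed α p = hmEmbed β p := by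
  simp only [hmEmbed]
  rw [intervalIntegral.integral_congr_Ioo_of_le p.2.2.2.1.le (g := fun s => p.1 (β s))
    fun s hs => by simp only [h hs]]

theorem average_split_of_mem_HSet {ν : HMIdx X → ℝ} (hν : ν ∈ HSet X) (φ : C(X, ℝ))
    {a t b : ℝ} (hab : 0 ≤ a ∧ a < b ∧ b ≤ 1) (hat : 0 ≤ a ∧ a < t ∧ t ≤ 1)
    (htb : 0 ≤ t ∧ t < b ∧ b ≤ 1) :
    (b - a) * ν ⟨φ, ⟨(a, b), hab⟩⟩ =
      (t - a) * ν ⟨φ, ⟨(a, t), hat⟩⟩ + (b - t) * ν ⟨φ, ⟨(t, b), htb⟩⟩ := by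
  suffices HSet X ⊆ {μ | (b - a) * μ ⟨φ, ⟨(a, b), hab⟩⟩ =
      (t - a) * μ ⟨φ, ⟨(a, t), hat⟩⟩ + (b - t) * μ ⟨φ, ⟨(t, b), htb⟩⟩} from this hν
  refine closure_minimal ?_ (isClosed_eq (by fun_prop) (by fun_prop))
  rintro _ ⟨γ, hγ, rfl⟩
  simp only [mem_ofPred_eq, hmEmbed]
  rw [mul_inv_cancel_left₀ (sub_ne_zero.mpr hab.2.1.ne'),
    mul_inv_cancel_left₀ (sub_ne_zero.mpr hat.2.1.ne'),
    mul_inv_cancel_left₀ (sub_ne_zero.mpr htb.2.1.ne'),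
    intervalIntegral.integral_add_adjacent_intervals
      (hγ.intervalIntegrable_comp_s7 φ hat.1 hat.2.1.le hat.2.2)
      (hγ.intervalIntegrable_comp_s7 φ htb.1 htb.2.1.le htb.2.2)]

theorem emap_self_of_mem_HSet {ν : HMIdx X → ℝ} (hν : ν ∈ HSet X) (t : ℝ) : emap ν ν t = ν := by
  funext ⟨φ, ⟨⟨a, b⟩, hab⟩⟩
  simp only [emap]
  split_ifs with hbt hta
  · rfl
  · rfl
  rw [← average_split_of_mem_HSet hν, mul_div_cancel_left₀ _ (sub_ne_zero.mpr hab.2.1.ne')]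

theorem emap_hmEmbed {α β : ℝ → X} (hα : IsStepFun α) (hβ : IsStepFun β) (t : ℝ) :
    emap (hmEmbed α) (hmEmbed β) t = hmEmbed fun s => if s < t then α s else β s := by
  set γ : ℝ → X := fun s => if s < t then α s else β s
  funext ⟨φ, ⟨⟨a, b⟩, hab⟩⟩
  simp only [emap]
  split_ifs with hbt hta
  · exact hmEmbed_apply_eq_of_eqOn fun s hs => by simp [γ, hs.2.trans_le hbt]
  · exact hmEmbed_apply_eq_of_eqOn fun s hs => by simp [γ, (hta.trans_lt hs.1).not_gt]
  push Not at hbt hta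
  rw [hmEmbed_apply_eq_of_eqOn (β := γ) fun s hs => by simp [γ, hs.2],
    hmEmbed_apply_eq_of_eqOn (α := β) (β := γ) fun s hs => by simp [γ, hs.1.not_gt],
    ← average_split_of_mem_HSet (subset_closure ⟨γ, (isStepFun_lt t).ite hα hβ, rfl⟩),
    mul_div_cancel_left₀ _ (sub_ne_zero.mpr hab.2.1.ne')]

theorem continuous_emap (t : ℝ) :
    Continuous fun q : (HMIdx X → ℝ) × (HMIdx X → ℝ) => emap q.1 q.2 t := by
  refine continuous_pi fun p => ?_
  simp only [emap]
  split_ifs <;> fun_prop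

theorem emap_mem_HSet {μ β : HMIdx X → ℝ} (hμ : μ ∈ HSet X) (hβ : β ∈ HSet X) (t : ℝ) :
    emap μ β t ∈ HSet X := by
  refine map_mem_closure₂ (f := fun μ β => emap μ β t) (continuous_emap t) hμ hβ ?_
  rintro _ ⟨α, hα, rfl⟩ _ ⟨β, hβ, rfl⟩
  exact ⟨_, (isStepFun_lt t).ite hα hβ, (emap_hmEmbed hα hβ t).symm⟩

end HSet

theorem Hmap_emap {X Y : Type u} [TopologicalSpace X] [TopologicalSpace Y] (f : C(X, Y))
    (μ β : HMIdx X → ℝ) (t : ℝ) : Hmap f (emap μ β t) = emap (Hmap f μ) (Hmap f β) t :=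
  rfl

theorem statement7_general {X Y : Type u} [TopologicalSpace X] [TopologicalSpace Y]
    (f : C(X, Y))
    (ν : HMIdx Y → ℝ) (hν : ν ∈ HSet Y) :
    HConvexSet {μ : HMIdx X → ℝ | μ ∈ HSet X ∧ Hmap f μ = ν} := by
  refine ⟨fun μ hμ β hβ t _ => ⟨emap_mem_HSet hμ.1 hβ.1 t, ?_⟩,
    fun μ hμ β hβ a b ha hb hab => ⟨convex_HSet hμ.1 hβ.1 ha hb hab, ?_⟩⟩
  · rw [Hmap_emap, hμ.2, hβ.2, emap_self_of_mem_HSet hν]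
  · show a • Hmap f μ + b • Hmap f β = ν
    rw [hμ.2, hβ.2, ← add_smul, hab, one_smul]

theorem statement7 {X Y : Type u} [TopologicalSpace X] [CompactSpace X] [T2Space X] [Nonempty X] [TopologicalSpace Y] [CompactSpace Y] [T2Space Y] [Nonempty Y]
    (f : C(X, Y)) (hf : Function.Surjective f)
    (ν : HMIdx Y → ℝ) (hν : ν ∈ HSet Y) :
    HConvexSet {μ : HMIdx X → ℝ | μ ∈ HSet X ∧ Hmap f μ = ν} :=
  statement7_general f ν hν

end
end
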